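/- Let Q : [0,∞) → ℝ be continuous on (0,∞) and bounded below, with Q(0) = 0, and suppose there exist constants c > 0 and ε > 0 such that Q(t) ≥ c·t⁻² for all t ∈ (0, ε]. Let h : ℝ → ℝ be continuous, nonnegative and not identically zero, square-integrable on ℝ, and let g : ℝ → ℝ be square-integrable on ℝ with h(y) − h(x) = ∫ₓʸ g(t) dt for all x ≤ y (i.e. h ∈ H¹(ℝ)). Then the energy E[h] = ∫_{{h>0}} (½ g(x)² + Q(h(x))) dx is infinite. In particular, mass-constrained minimizers of E in H¹(ℝ) do not exist when Q(t) ≳ t⁻² as t → 0⁺. -/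

import Mathlib

/-!
Finiteness of the energy forces `{h > 0}` to have finite measure: on `{0 < h ≤ ε}` the integrand
is at least `c / ε²`, and `{h > ε}` is controlled by `∫ h²`. Hence `h` has a first nonpositive point
`β` to the right of any point where it is positive. Cauchy–Schwarz in `h(x) ≤ -∫ₓ^β g` gives
`h(x)² ≤ (β - x) ∫ g²`, so near `β` the integrand is at least `Q(h) ≥ c / h² ≳ (β - x)⁻¹`, which is
not integrable.
-/

open MeasureTheory Filter Set Topology

theorem MeasureTheory.IntegrableOn.measure_lt_top_of_le {α : Type*} [MeasurableSpace α]
    {μ : Measure α} {f : α → ℝ} {s : Set α} {a : ℝ} (hf : IntegrableOn f s μ) (ha : 0 < a)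
    (hle : ∀ x ∈ s, a ≤ f x) : μ s < ⊤ :=
  calc μ s = μ.restrict s s := (Measure.restrict_apply_self μ s).symm
    _ ≤ μ.restrict s {x | a ≤ f x} := measure_mono hle
    _ < ⊤ := Integrable.measure_ge_lt_top hf ha

theorem measure_pos_lt_top_of_integrableOn {α : Type*} [MeasurableSpace α] {μ : Measure α}
    {h f : α → ℝ} {a ε : ℝ} (ha : 0 < a) (hε : 0 < ε) (hh : Integrable (fun x => h x ^ 2) μ)
    (hf : IntegrableOn f {x | 0 < h x} μ) (hfle : ∀ x, 0 < h x → h x ≤ ε → a ≤ f x) :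
    μ {x | 0 < h x} < ⊤ := by
  have hsmall : μ {x | 0 < h x ∧ h x ≤ ε} < ⊤ :=
    (hf.mono_set fun _ hx => hx.1).measure_lt_top_of_le ha fun x hx => hfle x hx.1 hx.2
  have hlarge : μ {x | ε < h x} < ⊤ :=
    hh.integrableOn.measure_lt_top_of_le (pow_pos hε 2) fun x hx =>
      pow_le_pow_left₀ hε.le (le_of_lt hx) 2
  have hsub : {x | 0 < h x} ⊆ {x | 0 < h x ∧ h x ≤ ε} ∪ {x | ε < h x} := fun x hx =>
    (le_or_gt (h x) ε).imp (fun hxε => ⟨hx, hxε⟩) id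
  calc μ {x | 0 < h x} ≤ μ ({x | 0 < h x ∧ h x ≤ ε} ∪ {x | ε < h x}) := measure_mono hsub
    _ ≤ μ {x | 0 < h x ∧ h x ≤ ε} + μ {x | ε < h x} := measure_union_le _ _
    _ < ⊤ := ENNReal.add_lt_top.2 ⟨hsmall, hlarge⟩

theorem exists_ge_notMem_of_volume_lt_top {s : Set ℝ} (hs : volume s < ⊤) (x₀ : ℝ) :
    ∃ x, x₀ ≤ x ∧ x ∉ s := by
  by_contra! hsub
  have hlt : volume (Ici x₀) < ⊤ := (measure_mono (show Ici x₀ ⊆ s from hsub)).trans_lt hs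
  exact hlt.ne Real.volume_Ici

theorem Continuous.exists_first_nonpos {h : ℝ → ℝ} (hh : Continuous h) {x₀ y : ℝ}
    (hx₀ : 0 < h x₀) (hx₀y : x₀ ≤ y) (hy : h y ≤ 0) :
    ∃ β, x₀ < β ∧ h β ≤ 0 ∧ ∀ x ∈ Ico x₀ β, 0 < h x := by
  set Z := Ici x₀ ∩ h ⁻¹' Iic 0
  have hZbdd : BddBelow Z := ⟨x₀, fun _ hx => hx.1⟩
  have hβZ : sInf Z ∈ Z :=
    (isClosed_Ici.inter (isClosed_Iic.preimage hh)).csInf_mem ⟨y, hx₀y, hy⟩ hZbdd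
  refine ⟨sInf Z, hβZ.1.lt_of_ne ?_, hβZ.2, fun x hx => ?_⟩
  · rintro hx₀β
    exact hx₀.not_ge (hx₀β ▸ hβZ.2)
  · by_contra! hxnonpos
    exact hx.2.not_ge (csInf_le hZbdd ⟨hx.1, hxnonpos⟩)

theorem Continuous.exists_Ioo_forall_mem_Ioo {h : ℝ → ℝ} (hh : Continuous h) {x₀ y ε : ℝ}
    (hε : 0 < ε) (hx₀ : 0 < h x₀) (hx₀y : x₀ ≤ y) (hy : h y ≤ 0) :
    ∃ a β, a < β ∧ h β ≤ 0 ∧ ∀ x ∈ Ioo a β, h x ∈ Ioo 0 ε := by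
  obtain ⟨β, hx₀β, hβ, hpos⟩ := hh.exists_first_nonpos hx₀ hx₀y hy
  have hnear : ∀ᶠ x in 𝓝[<] β, h x < ε := nhdsWithin_le_nhds <|
    hh.continuousAt.eventually_lt continuousAt_const (hβ.trans_lt hε)
  obtain ⟨l, hlβ, hl⟩ := mem_nhdsLT_iff_exists_Ioo_subset.1 hnear
  refine ⟨max l x₀, β, max_lt hlβ hx₀β, hβ, fun x hx => ⟨?_, ?_⟩⟩
  · exact hpos x ⟨(le_max_right l x₀).trans hx.1.le, hx.2⟩
  · exact hl ⟨(le_max_left l x₀).trans_lt hx.1, hx.2⟩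

theorem sq_intervalIntegral_le {g : ℝ → ℝ} {a b : ℝ} (hab : a ≤ b)
    (hg2 : IntervalIntegrable (fun t => g t ^ 2) volume a b) :
    (∫ t in a..b, g t) ^ 2 ≤ (b - a) * ∫ t in a..b, g t ^ 2 := by
  by_cases hg : IntervalIntegrable g volume a b
  swap
  · rw [intervalIntegral.integral_undef hg, zero_pow two_ne_zero]
    exact mul_nonneg (sub_nonneg.2 hab)
      (intervalIntegral.integral_nonneg hab fun t _ => sq_nonneg _)
  rcases hab.eq_or_lt with rfl | hlt
  · simp
  set I := ∫ t in a..b, g t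
  set G := ∫ t in a..b, g t ^ 2
  have hL : 0 < b - a := sub_pos.2 hlt
  -- integrate `2 l g ≤ g² + l²` and take `l = I / (b - a)`
  have hamgm : ∀ l : ℝ, 2 * l * I ≤ G + (b - a) * l ^ 2 := by
    intro l
    have hmono : ∫ t in a..b, 2 * l * g t ≤ ∫ t in a..b, (g t ^ 2 + l ^ 2) :=
      intervalIntegral.integral_mono_on hab (hg.const_mul _) (hg2.add intervalIntegrable_const)
        fun t _ => by linarith [two_mul_le_add_sq l (g t)]
    rwa [intervalIntegral.integral_const_mul, intervalIntegral.integral_add hg2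
      intervalIntegrable_const, intervalIntegral.integral_const, smul_eq_mul] at hmono
  have hopt : 2 * (I / (b - a)) * I - (b - a) * (I / (b - a)) ^ 2 = I ^ 2 / (b - a) := by
    field_simp
    ring
  have : I ^ 2 / (b - a) ≤ G := by linarith [hamgm (I / (b - a))]
  rwa [div_le_iff₀ hL, mul_comm] at this

theorem sq_le_sub_mul_integral_sq {h g : ℝ → ℝ} (hg : Integrable (fun t => g t ^ 2))
    (hfund : ∀ x y, x ≤ y → h y - h x = ∫ t in x..y, g t) {x β : ℝ} (hxβ : x ≤ β)
    (hx : 0 ≤ h x) (hβ : h β ≤ 0) : h x ^ 2 ≤ (β - x) * ∫ t, g t ^ 2 := by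
  have hle : h x ≤ -∫ t in x..β, g t := by linarith [hfund x β hxβ]
  have hloc : ∫ t in x..β, g t ^ 2 ≤ ∫ t, g t ^ 2 := by
    rw [intervalIntegral.integral_of_le hxβ]
    exact setIntegral_le_integral hg (Eventually.of_forall fun t => sq_nonneg _)
  calc h x ^ 2 ≤ (∫ t in x..β, g t) ^ 2 := by
        simpa only [neg_sq] using pow_le_pow_left₀ hx hle 2
    _ ≤ (β - x) * ∫ t in x..β, g t ^ 2 := sq_intervalIntegral_le hxβ hg.intervalIntegrable
    _ ≤ (β - x) * ∫ t, g t ^ 2 := mul_le_mul_of_nonneg_left hloc (sub_nonneg.2 hxβ)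

theorem not_integrableOn_Ioo_of_mul_inv_sub_le {f : ℝ → ℝ} {a b C : ℝ} (hab : a < b)
    (hC : 0 < C) (hf : ∀ x ∈ Ioo a b, C * (b - x)⁻¹ ≤ f x) : ¬ IntegrableOn f (Ioo a b) := by
  intro hfi
  have hinv : IntegrableOn (fun x => (x - b)⁻¹) (Ioo a b) := by
    refine (hfi.const_mul C⁻¹).mono' (by fun_prop) ?_
    filter_upwards [ae_restrict_mem measurableSet_Ioo] with x hx
    rw [norm_inv, Real.norm_eq_abs, abs_sub_comm, abs_of_pos (sub_pos.2 hx.2), le_inv_mul_iff₀ hC]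
    exact hf x hx
  have := (intervalIntegrable_iff_integrableOn_Ioo_of_le hab.le).2 hinv
  simp [hab.ne] at this

theorem energy_infinite_on_H1_general
    (Q : ℝ → ℝ)
    (c ε : ℝ) (hc : 0 < c) (hε : 0 < ε)
    (hQsing : ∀ t ∈ Set.Ioc (0:ℝ) ε, c / t ^ 2 ≤ Q t)
    (h g : ℝ → ℝ)
    (hhcont : Continuous h) (hhnn : ∀ x, 0 ≤ h x) (hhne : ∃ x, h x ≠ 0)
    (hhL2 : Integrable (fun x => (h x) ^ 2))
    (hgL2 : Integrable (fun x => (g x) ^ 2))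
    (hfund : ∀ x y : ℝ, x ≤ y → h y - h x = ∫ t in x..y, g t) :
    ¬ IntegrableOn (fun x => (1/2) * (g x) ^ 2 + Q (h x)) {x | 0 < h x} := by
  intro H
  have henergy : ∀ x, 0 < h x → h x ≤ ε → c / h x ^ 2 ≤ 1 / 2 * g x ^ 2 + Q (h x) :=
    fun x hx hxε => le_add_of_nonneg_of_le (by positivity) (hQsing _ ⟨hx, hxε⟩)
  obtain ⟨x₀, hx₀⟩ : ∃ x₀, 0 < h x₀ := hhne.imp fun x hx => (hhnn x).lt_of_ne' hx
  have hS : volume {x | 0 < h x} < ⊤ :=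
    measure_pos_lt_top_of_integrableOn (div_pos hc (pow_pos hε 2)) hε hhL2 H fun x hx hxε =>
      (div_le_div_of_nonneg_left hc.le (pow_pos hx 2) (pow_le_pow_left₀ hx.le hxε 2)).trans
        (henergy x hx hxε)
  obtain ⟨y, hx₀y, hy⟩ := exists_ge_notMem_of_volume_lt_top hS x₀
  obtain ⟨a, β, haβ, hβ, hsmall⟩ := hhcont.exists_Ioo_forall_mem_Ioo hε hx₀ hx₀y (not_lt.1 hy)
  have hbound : ∀ x ∈ Ioo a β, h x ^ 2 ≤ (β - x) * ∫ t, g t ^ 2 := fun x hx =>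
    sq_le_sub_mul_integral_sq hgL2 hfund hx.2.le (hsmall x hx).1.le hβ
  obtain ⟨x₁, hx₁⟩ := nonempty_Ioo.2 haβ
  have hK : 0 < ∫ t, g t ^ 2 :=
    pos_of_mul_pos_right ((pow_pos (hsmall x₁ hx₁).1 2).trans_le (hbound x₁ hx₁))
      (sub_nonneg.2 hx₁.2.le)
  refine not_integrableOn_Ioo_of_mul_inv_sub_le haβ (div_pos hc hK) (fun x hx => ?_)
    (H.mono_set fun x hx' => (hsmall x hx').1)
  calc c / (∫ t, g t ^ 2) * (β - x)⁻¹ = c / ((β - x) * ∫ t, g t ^ 2) := by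
        rw [mul_comm (β - x), ← div_eq_mul_inv, div_div]
    _ ≤ c / h x ^ 2 :=
        div_le_div_of_nonneg_left hc.le (pow_pos (hsmall x hx).1 2) (hbound x hx)
    _ ≤ 1 / 2 * g x ^ 2 + Q (h x) := henergy x (hsmall x hx).1 (hsmall x hx).2.le

theorem energy_infinite_on_H1
    (Q : ℝ → ℝ) (hQcont : ContinuousOn Q (Set.Ioi 0))
    (hQbdd : ∃ B : ℝ, ∀ t : ℝ, 0 ≤ t → B ≤ Q t)
    (hQ0 : Q 0 = 0)
    (c ε : ℝ) (hc : 0 < c) (hε : 0 < ε)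
    (hQsing : ∀ t ∈ Set.Ioc (0:ℝ) ε, c / t ^ 2 ≤ Q t)
    (h g : ℝ → ℝ)
    (hhcont : Continuous h) (hhnn : ∀ x, 0 ≤ h x) (hhne : ∃ x, h x ≠ 0)
    (hhL2 : Integrable (fun x => (h x) ^ 2))
    (hgL2 : Integrable (fun x => (g x) ^ 2))
    (hfund : ∀ x y : ℝ, x ≤ y → h y - h x = ∫ t in x..y, g t) :
    ¬ IntegrableOn (fun x => (1/2) * (g x) ^ 2 + Q (h x)) {x | 0 < h x} :=
  energy_infinite_on_H1_general Q c ε hc hε hQsing h g hhcont hhnn hhne hhL2 hgL2 hfund
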